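/- For all natural numbers n and s and all complex numbers x and z, the sum over k from 0 to n of binom(k+s, k)·C(x−k, n−k)·z^k equals the sum over k from 0 to n of binom(k+s, k)·C(x+s+1, n−k)·(z−1)^k, where binom(k+s,k) denotes the ordinary binomial coefficient of natural numbers. -/

import Mathlib

/-!
Write `x - k = (x + s + 1) - (k + s) - 1`. Chu–Vandermonde with upper negation,
`C(-a - 1, t) = (-1)^t binom(t + a, t)`, gives
`C(x - k, n - k) = ∑ₜ (-1)^t binom(t + k + s, t) C(x + s + 1, n - k - t)`. Regrouping by `j = k + t`,
the identity `binom(k + s, k) binom(j + s, j - k) = binom(j + s, j) binom(j, k)` turns the inner sum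
over `k` into the binomial expansion of `(z - 1)^j`.
-/

/-- The generalized binomial coefficient `C(x, k) = x(x-1)⋯(x-k+1)/k!` for `x : ℂ`. -/
noncomputable def genBinom (x : ℂ) (k : ℕ) : ℂ := (∏ i ∈ Finset.range k, (x - i)) / (Nat.factorial k)

open Finset

theorem Nat.choose_add_mul_choose_sub {j k : ℕ} (s : ℕ) (hkj : k ≤ j) :
    (k + s).choose k * (j + s).choose (j - k) = (j + s).choose j * j.choose k := by
  rw [← Nat.choose_symm hkj, Nat.choose_mul (n := j + s) (Nat.sub_le j k),
    show j + s - (j - k) = k + s by omega, Nat.sub_sub_self hkj, mul_comm]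

namespace Ring

variable {R : Type*} [CommRing R] [BinomialRing R]

theorem choose_neg_natCast_sub_one (a t : ℕ) :
    choose (-(a : R) - 1) t = (-1) ^ t * ((t + a).choose t : R) := by
  rw [← neg_add', choose_neg, add_right_comm, add_sub_cancel_right, ← Nat.cast_add,
    choose_natCast, Units.smul_def, Int.coe_negOnePow_natCast, zsmul_eq_mul, add_comm a]
  push_cast; ring

theorem choose_sub_natCast_sub_one (y : R) (a N : ℕ) :
    choose (y - a - 1) N =
      ∑ t ∈ range (N + 1), (-1) ^ t * ((t + a).choose t : R) * choose y (N - t) := by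
  rw [show y - a - 1 = (-(a : R) - 1) + y by ring, add_choose_eq N (Commute.all _ _),
    Nat.sum_antidiagonal_eq_sum_range_succ_mk]
  simp only [choose_neg_natCast_sub_one]

theorem sum_choose_mul_choose_sub_mul_pow (n s : ℕ) (x z : R) :
    ∑ k ∈ range (n + 1), ((k + s).choose k : R) * choose (x - k) (n - k) * z ^ k =
      ∑ k ∈ range (n + 1), ((k + s).choose k : R) * choose (x + s + 1) (n - k) * (z - 1) ^ k := by
  set y := x + s + 1
  let f : ℕ → ℕ → R := fun k t =>
    (k + s).choose k * ((-1) ^ t * (t + (k + s)).choose t * choose y (n - k - t)) * z ^ k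
  calc _ = ∑ k ∈ range (n + 1), ∑ t ∈ range (n + 1 - k), f k t := by
        refine sum_congr rfl fun k hk => ?_
        rw [show x - k = y - (k + s : ℕ) - 1 by push_cast; ring, choose_sub_natCast_sub_one,
          ← Nat.sub_add_comm (by simpa [Nat.lt_succ_iff] using hk), mul_sum, sum_mul]
    _ = ∑ j ∈ range (n + 1), ∑ k ∈ range (j + 1), f k (j - k) := (sum_range_diag_flip _ _).symm
    _ = _ := by
        refine sum_congr rfl fun j _ => ?_
        rw [sub_eq_add_neg, add_pow, mul_sum]
        refine sum_congr rfl fun k hk => ?_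
        have hkj : k ≤ j := Nat.lt_succ_iff.mp (mem_range.mp hk)
        have hchoose : ((k + s).choose k : R) * (j + s).choose (j - k) =
            (j + s).choose j * j.choose k :=
          mod_cast congrArg (Nat.cast : ℕ → R) (Nat.choose_add_mul_choose_sub s hkj)
        simp only [f]
        rw [show j - k + (k + s) = j + s by omega, show n - k - (j - k) = n - j by omega]
        linear_combination (-1) ^ (j - k) * choose y (n - j) * z ^ k * hchoose

end Ring

theorem genBinom_eq_choose (x : ℂ) (k : ℕ) : genBinom x k = Ring.choose x k := by
  rw [Ring.choose_eq_smul, ← Polynomial.aeval_eq_smeval, ← Polynomial.eval_map_algebraMap,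
    descPochhammer_map, descPochhammer_eval_eq_prod_range, genBinom, smul_eq_mul, div_eq_inv_mul]

theorem ks_identity (n s : ℕ) (x z : ℂ) :
    ∑ k ∈ Finset.range (n + 1), ((k + s).choose k : ℂ) * genBinom (x - k) (n - k) * z ^ k =
      ∑ k ∈ Finset.range (n + 1),
        ((k + s).choose k : ℂ) * genBinom (x + s + 1) (n - k) * (z - 1) ^ k := by
  simp only [genBinom_eq_choose]
  exact Ring.sum_choose_mul_choose_sub_mul_pow n s x z
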